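/- arXiv:2105.07536 — 2 statements merged into one kernel-verified Lean document; each statement's English description precedes it below -/
import Mathlib

section
/- Let P be an n×n symmetric nonnegative matrix with Laplacian L(P) having eigenvalues 0 = λ_1 = ... = λ_R < λ_{R+1} ≤ ... ≤ λ_n, and let U ∈ R^{n×R} have orthonormal columns spanning the null space of L(P). Let H_n = (1/(n(n-1)))(1_n 1_n^T − I_n), and suppose h, α > 0 satisfy h·α·λ_n < 1. Then for every y ∈ R^n, ‖(I − h·L(αP − H_n))^k y − (1 + h/(n-1))^k U'U'^T y − n^{-1} 1_n 1_n^T y‖_2 ≤ (1 + h/(n-1) − h·α·λ_{R+1})^k ‖y‖_2, where U' consists of the columns of U orthogonal to 1_n. -/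
open Matrix BigOperators

/-- The graph Laplacian L(A) = D(A) - A. -/
noncomputable def lap {n : ℕ} (A : Matrix (Fin n) (Fin n) ℝ) : Matrix (Fin n) (Fin n) ℝ :=
  Matrix.diagonal (fun j => ∑ i, A i j) - A

/-- The centering matrix H_n = (1/(n(n-1)))(1 1ᵀ − I). -/
noncomputable def Hmat (n : ℕ) : Matrix (Fin n) (Fin n) ℝ :=
  (((n : ℝ) * ((n : ℝ) - 1))⁻¹) • (Matrix.of (fun _ _ => (1 : ℝ)) - 1)

noncomputable def vnorm {n : ℕ} (v : Fin n → ℝ) : ℝ := Real.sqrt (∑ i, v i ^ 2)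

/-!
The `u i` form an orthonormal eigenbasis of `L(P)`. Since `L(H_n)` kills `1` and acts as
`(n - 1)⁻¹` on its orthogonal complement, every `u i` is also an eigenvector of
`M = I - h L(αP - H_n)`, with eigenvalue `1` for `u 0 = n^{-1/2} 1` and
`1 + h/(n-1) - hαλ_i` otherwise. Expanding `y` in this basis, the two subtracted terms remove
exactly the components with `i < R`; the remaining eigenvalues lie in
`[0, 1 + h/(n-1) - hαλ_{R+1}]` because `hαλ_n < 1`, and Bessel's inequality gives the bound.
-/

theorem Orthonormal.norm_sum_mul_inner_smul_le {E ι : Type*} [NormedAddCommGroup E]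
    [InnerProductSpace ℝ E] {v : ι → E} (hv : Orthonormal ℝ v) (s : Finset ι) {d : ι → ℝ}
    {C : ℝ} (hC : 0 ≤ C) (hd : ∀ i ∈ s, |d i| ≤ C) (x : E) :
    ‖∑ i ∈ s, (d i * inner ℝ (v i) x) • v i‖ ≤ C * ‖x‖ := by
  refine (pow_le_pow_iff_left₀ (norm_nonneg _) (by positivity) two_ne_zero).mp ?_
  calc ‖∑ i ∈ s, (d i * inner ℝ (v i) x) • v i‖ ^ 2
      = ∑ i ∈ s, d i ^ 2 * ‖inner ℝ (v i) x‖ ^ 2 := by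
        rw [← real_inner_self_eq_norm_sq, hv.inner_sum]
        simp only [conj_trivial, Real.norm_eq_abs, sq_abs]
        exact Finset.sum_congr rfl fun i _ => by ring
    _ ≤ ∑ i ∈ s, C ^ 2 * ‖inner ℝ (v i) x‖ ^ 2 := by
        refine Finset.sum_le_sum fun i hi => mul_le_mul_of_nonneg_right ?_ (sq_nonneg _)
        exact sq_le_sq.mpr ((hd i hi).trans (le_abs_self C))
    _ ≤ C ^ 2 * ‖x‖ ^ 2 := by
        rw [← Finset.mul_sum]
        exact mul_le_mul_of_nonneg_left (hv.sum_inner_products_le x) (sq_nonneg C)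
    _ = (C * ‖x‖) ^ 2 := by ring

theorem vnorm_eq_norm_toLp {n : ℕ} (v : Fin n → ℝ) :
    vnorm v = ‖(WithLp.toLp 2 v : EuclideanSpace ℝ (Fin n))‖ := by
  simp [vnorm, EuclideanSpace.norm_eq, Real.norm_eq_abs, sq_abs]

theorem orthonormal_toLp_of_dotProduct {ι : Type*} [DecidableEq ι] {n : ℕ}
    {u : ι → Fin n → ℝ} (horth : ∀ i j, u i ⬝ᵥ u j = if i = j then 1 else 0) :
    Orthonormal ℝ fun i => (WithLp.toLp 2 (u i) : EuclideanSpace ℝ (Fin n)) := by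
  rw [orthonormal_iff_ite]
  intro i j
  rw [EuclideanSpace.inner_toLp_toLp, star_trivial, dotProduct_comm, horth]

theorem vnorm_sum_mul_dotProduct_smul_le {ι : Type*} [DecidableEq ι] {n : ℕ}
    {u : ι → Fin n → ℝ} (horth : ∀ i j, u i ⬝ᵥ u j = if i = j then 1 else 0) (s : Finset ι)
    {d : ι → ℝ} {C : ℝ} (hC : 0 ≤ C) (hd : ∀ i ∈ s, |d i| ≤ C) (y : Fin n → ℝ) :
    vnorm (∑ i ∈ s, (d i * (u i ⬝ᵥ y)) • u i) ≤ C * vnorm y := by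
  have := (orthonormal_toLp_of_dotProduct horth).norm_sum_mul_inner_smul_le s hC hd
    (WithLp.toLp 2 y)
  simpa [vnorm_eq_norm_toLp, WithLp.toLp_sum, EuclideanSpace.inner_toLp_toLp,
    dotProduct_comm y] using this

theorem sum_dotProduct_smul_eq_self {ι R : Type*} [Fintype ι] [DecidableEq ι] [CommRing R]
    {u : ι → ι → R} (horth : ∀ i j, u i ⬝ᵥ u j = if i = j then 1 else 0) (y : ι → R) :
    ∑ i, (u i ⬝ᵥ y) • u i = y := by
  have hQ : of u * (of u)ᵀ = 1 := by
    ext i j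
    simpa [Matrix.mul_apply, dotProduct, Matrix.one_apply] using horth i j
  calc ∑ i, (u i ⬝ᵥ y) • u i = (of u)ᵀ *ᵥ (of u *ᵥ y) := by
        rw [mulVec_transpose, vecMul_eq_sum]; rfl
    _ = y := by rw [mulVec_mulVec, mul_eq_one_comm.mp hQ, one_mulVec]

theorem pow_mulVec_eq_smul_of_mulVec_eq_smul {ι R : Type*} [Fintype ι] [DecidableEq ι]
    [CommRing R] {M : Matrix ι ι R} {v : ι → R} {μ : R} (hv : M *ᵥ v = μ • v) (k : ℕ) :
    (M ^ k) *ᵥ v = μ ^ k • v := by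
  induction k with
  | zero => simp
  | succ k ih => rw [pow_succ', ← mulVec_mulVec, ih, mulVec_smul, hv, smul_smul, pow_succ]

theorem pow_mulVec_eq_sum_of_orthonormal {ι R : Type*} [Fintype ι] [DecidableEq ι] [CommRing R]
    {u : ι → ι → R} (horth : ∀ i j, u i ⬝ᵥ u j = if i = j then 1 else 0)
    {M : Matrix ι ι R} {μ : ι → R} (hM : ∀ i, M *ᵥ u i = μ i • u i) (k : ℕ) (y : ι → R) :
    (M ^ k) *ᵥ y = ∑ i, (μ i ^ k * (u i ⬝ᵥ y)) • u i := by
  conv_lhs => rw [← sum_dotProduct_smul_eq_self horth y]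
  simp_rw [mulVec_sum, mulVec_smul, pow_mulVec_eq_smul_of_mulVec_eq_smul (hM _), smul_smul,
    mul_comm]

theorem lap_sub {n : ℕ} (A B : Matrix (Fin n) (Fin n) ℝ) : lap (A - B) = lap A - lap B := by
  ext i j
  simp only [lap, Matrix.sub_apply, diagonal_apply, Finset.sum_sub_distrib]
  split <;> ring

theorem lap_smul {n : ℕ} (r : ℝ) (A : Matrix (Fin n) (Fin n) ℝ) : lap (r • A) = r • lap A := by
  ext i j
  simp only [lap, Matrix.smul_apply, Matrix.sub_apply, diagonal_apply, smul_eq_mul,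
    ← Finset.mul_sum]
  split <;> ring

theorem lap_Hmat_mulVec (n : ℕ) (v : Fin n → ℝ) :
    lap (Hmat n) *ᵥ v = ((n : ℝ) * (n - 1))⁻¹ • ((n : ℝ) • v - (∑ j, v j) • fun _ => 1) := by
  funext j
  simp only [lap, Hmat, mulVec, dotProduct, Matrix.sub_apply, Matrix.smul_apply, diagonal_apply,
    one_apply, of_apply, smul_eq_mul, Pi.sub_apply, Pi.smul_apply]
  simp only [mul_sub, sub_mul, mul_ite, ite_mul, mul_one, mul_zero, zero_mul,
    Finset.sum_sub_distrib, Finset.sum_ite_eq, Finset.sum_ite_eq', Finset.mem_univ, if_true,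
    Finset.sum_const, Finset.card_univ, Fintype.card_fin, nsmul_eq_mul, ← Finset.mul_sum]
  ring

section Iteration

variable {n : ℕ} {P : Matrix (Fin n) (Fin n) ℝ} (h α : ℝ)

theorem iteration_mulVec_const {a : ℝ} (hP : lap P *ᵥ (fun _ => a) = 0) :
    (1 - h • lap (α • P - Hmat n)) *ᵥ (fun _ => a) = fun _ => a := by
  have hH : lap (Hmat n) *ᵥ (fun _ => a) = 0 := by
    rw [lap_Hmat_mulVec]
    funext j
    simp
  rw [sub_mulVec, lap_sub, lap_smul, smul_mulVec, sub_mulVec, smul_mulVec, hP, hH]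
  simp

theorem iteration_mulVec_of_sum_eq_zero (hn : (n : ℝ) ≠ 0) {v : Fin n → ℝ} {l : ℝ}
    (hv : lap P *ᵥ v = l • v) (hsum : ∑ j, v j = 0) :
    (1 - h • lap (α • P - Hmat n)) *ᵥ v = (1 + h / ((n : ℝ) - 1) - h * α * l) • v := by
  have hH : lap (Hmat n) *ᵥ v = ((n : ℝ) - 1)⁻¹ • v := by
    rw [lap_Hmat_mulVec, hsum, zero_smul, sub_zero, smul_smul, mul_inv, mul_comm (n : ℝ)⁻¹,
      mul_assoc, inv_mul_cancel₀ hn, mul_one]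
  rw [sub_mulVec, lap_sub, lap_smul, smul_mulVec, sub_mulVec, smul_mulVec, hv, hH, one_mulVec]
  funext j
  simp only [Pi.sub_apply, Pi.smul_apply, smul_eq_mul]
  ring

end Iteration

theorem sum_eq_zero_of_dotProduct_const_eq_zero {ι K : Type*} [Fintype ι] [Field K]
    {v : ι → K} {a : K} (ha : a ≠ 0) (hv : v ⬝ᵥ (fun _ => a) = 0) : ∑ j, v j = 0 := by
  simpa [dotProduct, ← Finset.sum_mul, ha] using hv

noncomputable def iterationEigenvalue (n : ℕ) (h α : ℝ) (lam : Fin n → ℝ) (i : Fin n) : ℝ :=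
  if (i : ℕ) = 0 then 1 else 1 + h / ((n : ℝ) - 1) - h * α * lam i

section Spectrum

variable {n : ℕ} {P : Matrix (Fin n) (Fin n) ℝ} {u : Fin n → Fin n → ℝ} {lam : Fin n → ℝ}

theorem iteration_mulVec_eigvec (hn : 0 < n)
    (horth : ∀ i j, u i ⬝ᵥ u j = if i = j then 1 else 0)
    (heig : ∀ i, lap P *ᵥ u i = lam i • u i)
    (hone : u ⟨0, hn⟩ = fun _ => (Real.sqrt n)⁻¹) (hlam0 : lam ⟨0, hn⟩ = 0) (h α : ℝ)
    (i : Fin n) :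
    (1 - h • lap (α • P - Hmat n)) *ᵥ u i = iterationEigenvalue n h α lam i • u i := by
  have hnR : (0 : ℝ) < n := Nat.cast_pos.mpr hn
  by_cases hi : (i : ℕ) = 0
  · obtain rfl : i = ⟨0, hn⟩ := Fin.ext hi
    rw [iterationEigenvalue, if_pos rfl, one_smul, hone]
    apply iteration_mulVec_const
    rw [← hone, heig, hlam0, zero_smul]
  · rw [iterationEigenvalue, if_neg hi]
    refine iteration_mulVec_of_sum_eq_zero h α hnR.ne' (heig i) ?_
    refine sum_eq_zero_of_dotProduct_const_eq_zero (inv_ne_zero (Real.sqrt_pos.mpr hnR).ne') ?_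
    rw [← hone, horth, if_neg fun e => hi (by rw [e])]

theorem iteration_error_eq_sum {R : ℕ} (hn : 0 < n) (hR : 0 < R)
    (horth : ∀ i j, u i ⬝ᵥ u j = if i = j then 1 else 0)
    (heig : ∀ i, lap P *ᵥ u i = lam i • u i) (hnull : ∀ i : Fin n, lam i = 0 ↔ (i : ℕ) < R)
    (hone : u ⟨0, hn⟩ = fun _ => (Real.sqrt n)⁻¹) (h α : ℝ) (y : Fin n → ℝ) (k : ℕ) :
    ((1 - h • lap (α • P - Hmat n)) ^ k) *ᵥ y
        - (1 + h / ((n : ℝ) - 1)) ^ k •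
            ∑ i ∈ Finset.univ.filter (fun i : Fin n => 0 < (i : ℕ) ∧ (i : ℕ) < R),
              (u i ⬝ᵥ y) • u i
        - (n : ℝ)⁻¹ • (∑ j, y j) • (fun _ => (1 : ℝ))
      = ∑ i : Fin n, ((if R ≤ (i : ℕ) then (1 + h / ((n : ℝ) - 1) - h * α * lam i) ^ k else 0)
          * (u i ⬝ᵥ y)) • u i := by
  set i0 : Fin n := ⟨0, hn⟩
  have hM := iteration_mulVec_eigvec hn horth heig hone ((hnull i0).mpr hR) h α
  have hsqrt : (Real.sqrt n)⁻¹ * (Real.sqrt n)⁻¹ = (n : ℝ)⁻¹ := by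
    rw [← mul_inv, Real.mul_self_sqrt (Nat.cast_nonneg n)]
  have hmean : (n : ℝ)⁻¹ • (∑ j, y j) • (fun _ => (1 : ℝ))
      = ∑ i, (if i = i0 then u i ⬝ᵥ y else 0) • u i := by
    simp only [ite_smul, zero_smul, Finset.sum_ite_eq', Finset.mem_univ, if_true, hone]
    funext j
    simp only [Pi.smul_apply, smul_eq_mul, dotProduct, ← Finset.mul_sum, ← hsqrt]
    ring
  rw [pow_mulVec_eq_sum_of_orthonormal horth hM, hmean, Finset.smul_sum, Finset.sum_filter,
    ← Finset.sum_sub_distrib, ← Finset.sum_sub_distrib]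
  refine Finset.sum_congr rfl fun i _ => ?_
  rcases Nat.lt_or_ge (i : ℕ) R with hiR | hiR
  · by_cases hi0 : (i : ℕ) = 0
    · obtain rfl : i = i0 := Fin.ext hi0
      simp [iterationEigenvalue, hi0, hR.ne']
    · have hne : i ≠ i0 := fun e => hi0 (by rw [e])
      simp [iterationEigenvalue, hi0, hne, (hnull i).mpr hiR, Nat.pos_of_ne_zero hi0, hiR,
        hiR.not_ge, smul_smul]
  · have hi0 : (i : ℕ) ≠ 0 := by omega
    have hne : i ≠ i0 := fun e => hi0 (by rw [e])
    simp [iterationEigenvalue, hi0, hiR, hne, Nat.not_lt.mpr hiR]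

end Spectrum

theorem abs_pow_tail_eigenvalue_le {n R : ℕ} {lam : Fin n → ℝ} (hRn : R < n)
    (hmono : Monotone lam) {h α : ℝ} (hh : 0 ≤ h) (hα : 0 ≤ α)
    (hlt : h * α * lam ⟨n - 1, Nat.sub_one_lt_of_lt hRn⟩ < 1) (k : ℕ) (i : Fin n)
    (hi : R ≤ (i : ℕ)) :
    |(1 + h / ((n : ℝ) - 1) - h * α * lam i) ^ k|
      ≤ (1 + h / ((n : ℝ) - 1) - h * α * lam ⟨R, hRn⟩) ^ k := by
  have hshift : 0 ≤ h / ((n : ℝ) - 1) :=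
    div_nonneg hh (sub_nonneg.mpr (Nat.one_le_cast.mpr (by omega)))
  have hlast : h * α * lam i ≤ h * α * lam ⟨n - 1, Nat.sub_one_lt_of_lt hRn⟩ :=
    mul_le_mul_of_nonneg_left (hmono (Fin.mk_le_mk.mpr (by omega))) (mul_nonneg hh hα)
  have hfirst : h * α * lam ⟨R, hRn⟩ ≤ h * α * lam i :=
    mul_le_mul_of_nonneg_left (hmono (Fin.mk_le_mk.mpr hi)) (mul_nonneg hh hα)
  have hpos : 0 ≤ 1 + h / ((n : ℝ) - 1) - h * α * lam i := by linarith
  rw [abs_of_nonneg (pow_nonneg hpos k)]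
  exact pow_le_pow_left₀ hpos (by linarith) k

/-- Power-iteration bound: if L(P) has eigenvalues 0 = λ_1 = ... = λ_R < λ_{R+1} ≤ ... ≤ λ_n
with orthonormal eigenvectors u_i, the first being n^{-1/2}1, and hαλ_n < 1, then for all y,
‖(I − h L(αP − H_n))^k y − (1 + h/(n-1))^k U'U'ᵀ y − n⁻¹ 1 1ᵀ y‖₂
  ≤ (1 + h/(n-1) − hαλ_{R+1})^k ‖y‖₂,
where U' consists of the null-space eigenvectors orthogonal to 1. -/
theorem power_iteration_bound {n R : ℕ} (hR : 0 < R) (hRn : R < n)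
    (P : Matrix (Fin n) (Fin n) ℝ)
    (u : Fin n → (Fin n → ℝ)) (lam : Fin n → ℝ)
    (horth : ∀ i j, u i ⬝ᵥ u j = if i = j then 1 else 0)
    (heig : ∀ i, (lap P).mulVec (u i) = lam i • u i)
    (hmono : Monotone lam)
    (hnull : ∀ i : Fin n, lam i = 0 ↔ (i : ℕ) < R)
    (hone : u ⟨0, by omega⟩ = fun _ => (Real.sqrt n)⁻¹)
    (α h : ℝ) (hα : 0 < α) (hh : 0 < h)
    (hlt : h * α * lam ⟨n - 1, by omega⟩ < 1)
    (y : Fin n → ℝ) (k : ℕ) :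
    vnorm ((((1 : Matrix (Fin n) (Fin n) ℝ) - h • lap (α • P - Hmat n)) ^ k).mulVec y
        - (1 + h / ((n : ℝ) - 1)) ^ k •
            ∑ i ∈ Finset.univ.filter (fun i : Fin n => 0 < (i : ℕ) ∧ (i : ℕ) < R),
              (u i ⬝ᵥ y) • u i
        - (n : ℝ)⁻¹ • (∑ j, y j) • (fun _ => (1 : ℝ)))
      ≤ (1 + h / ((n : ℝ) - 1) - h * α * lam ⟨R, hRn⟩) ^ k * vnorm y := by
  have hbound := abs_pow_tail_eigenvalue_le hRn hmono hh.le hα.le hlt k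
  have hC := (abs_nonneg _).trans (hbound ⟨R, hRn⟩ le_rfl)
  rw [iteration_error_eq_sum (Nat.zero_lt_of_lt hRn) hR horth heig hnull hone h α y k]
  refine vnorm_sum_mul_dotProduct_smul_le horth _ hC (fun i _ => ?_) y
  split_ifs with hi
  · exact hbound i hi
  · simpa using hC
end

section
/- Let p_{ij} ≥ 0, α > 0, y_1,...,y_n ∈ R^2 with η = (diam{y_i})² < 1, and define S_{ij}(α) = (α·p_{ij} − q_{ij})/(1 + ‖y_i−y_j‖²) with q_{ij} as the t-distributed similarity. Then for all i ≠ j, |S_{ij}(α) − α·p_{ij} + 1/(n(n-1))| ≤ α·p_{ij}·η + 2η/(n(n-1)(1−η)). -/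
open BigOperators

/-- Squared Euclidean distance between the i-th and j-th embedding points in R². -/
noncomputable def dsq {n : ℕ} (y : Fin n → Fin 2 → ℝ) (i j : Fin n) : ℝ :=
  ∑ l, (y i l - y j l) ^ 2

/-- Normalizing constant Z = Σ_{ℓ≠s} (1 + ‖y_ℓ − y_s‖²)⁻¹. -/
noncomputable def Znorm {n : ℕ} (y : Fin n → Fin 2 → ℝ) : ℝ :=
  ∑ i, ∑ j, if i = j then 0 else (1 + dsq y i j)⁻¹

/-- t-distributed similarity q_{ij} = (1 + ‖y_i − y_j‖²)⁻¹ / Z. -/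
noncomputable def qsim {n : ℕ} (y : Fin n → Fin 2 → ℝ) (i j : Fin n) : ℝ :=
  (1 + dsq y i j)⁻¹ / Znorm y

/-- The exaggerated gradient coefficient S_{ij}(α) = (α p_{ij} − q_{ij})/(1 + ‖y_i − y_j‖²). -/
noncomputable def Scoef {n : ℕ} (p : Fin n → Fin n → ℝ) (α : ℝ)
    (y : Fin n → Fin 2 → ℝ) (i j : Fin n) : ℝ :=
  (α * p i j - qsim y i j) / (1 + dsq y i j)

/-! Each off-diagonal kernel value `(1 + dsq y a b)⁻¹` lies in `[(1 + η)⁻¹, 1]`, so the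
normalizer `Znorm y` lies in `[n(n-1)/(1+η), n(n-1)]`. Hence `q_ij / (1 + d_ij) = ((1 + d_ij)² Z)⁻¹`
is within `2η / (n(n-1)(1-η))` of `1 / (n(n-1))`, while the `α p_ij` term moves by
`α p_ij d_ij / (1 + d_ij) ≤ α p_ij η`. -/

theorem sum_sum_ite_eq_zero_const {ι : Type*} [Fintype ι] [DecidableEq ι] (c : ℝ) :
    (∑ a : ι, ∑ b : ι, if a = b then 0 else c)
      = (Fintype.card ι : ℝ) * ((Fintype.card ι : ℝ) - 1) * c := by
  have hrow : ∀ a : ι, (∑ b : ι, if a = b then 0 else c) = ((Fintype.card ι : ℝ) - 1) * c := by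
    intro a
    rw [Finset.sum_ite, Finset.sum_const_zero, zero_add, Finset.sum_const, Finset.filter_ne,
      Finset.card_erase_of_mem (Finset.mem_univ a), Finset.card_univ, nsmul_eq_mul,
      Nat.cast_pred (Fintype.card_pos_iff.mpr ⟨a⟩)]
  simp only [hrow, Finset.sum_const, Finset.card_univ, nsmul_eq_mul, mul_assoc]

section Embedding

variable {n : ℕ} (y : Fin n → Fin 2 → ℝ)

theorem dsq_nonneg (a b : Fin n) : 0 ≤ dsq y a b :=
  Finset.sum_nonneg fun _ _ => sq_nonneg _

theorem dsq_le_iSup_iSup (a b : Fin n) : dsq y a b ≤ ⨆ i, ⨆ j, dsq y i j :=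
  (le_ciSup (Set.finite_range _).bddAbove b).trans (le_ciSup (f := fun i => ⨆ j, dsq y i j) (Set.finite_range _).bddAbove a)

theorem Znorm_le : Znorm y ≤ (n : ℝ) * ((n : ℝ) - 1) := by
  calc Znorm y ≤ ∑ a : Fin n, ∑ b : Fin n, if a = b then 0 else (1 : ℝ) := by
        refine Finset.sum_le_sum fun a _ => Finset.sum_le_sum fun b _ => ?_
        split_ifs
        · rfl
        · exact inv_le_one_of_one_le₀ (le_add_of_nonneg_right (dsq_nonneg y a b))
    _ = (n : ℝ) * ((n : ℝ) - 1) := by simp [sum_sum_ite_eq_zero_const]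

theorem div_one_add_le_Znorm {η : ℝ} (hdη : ∀ a b, dsq y a b ≤ η) :
    (n : ℝ) * ((n : ℝ) - 1) / (1 + η) ≤ Znorm y := by
  calc (n : ℝ) * ((n : ℝ) - 1) / (1 + η)
        = ∑ a : Fin n, ∑ b : Fin n, if a = b then 0 else (1 + η)⁻¹ := by
        simp [sum_sum_ite_eq_zero_const, div_eq_mul_inv]
    _ ≤ Znorm y := by
        refine Finset.sum_le_sum fun a _ => Finset.sum_le_sum fun b _ => ?_
        split_ifs
        · rfl
        · exact inv_anti₀ (by linarith [dsq_nonneg y a b]) (by linarith [hdη a b])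

theorem Scoef_eq (p : Fin n → Fin n → ℝ) (α : ℝ) (i j : Fin n) :
    Scoef p α y i j
      = α * p i j / (1 + dsq y i j) - ((1 + dsq y i j) ^ 2 * Znorm y)⁻¹ := by
  rw [Scoef, qsim, sub_div, mul_inv, ← inv_pow]
  ring

end Embedding

theorem abs_div_one_add_sub_self_le {a d η : ℝ} (ha : 0 ≤ a) (hd : 0 ≤ d) (hdη : d ≤ η) :
    |a / (1 + d) - a| ≤ a * η := by
  have hsub : a / (1 + d) - a = -(a * d / (1 + d)) := by
    field_simp
    ring
  rw [hsub, abs_neg, abs_of_nonneg (by positivity)]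
  calc a * d / (1 + d) ≤ a * d := div_le_self (by positivity) (by linarith)
    _ ≤ a * η := mul_le_mul_of_nonneg_left hdη ha

theorem abs_inv_sub_inv_sq_mul_le {d η N Z : ℝ} (hd : 0 ≤ d) (hdη : d ≤ η) (hη1 : η < 1)
    (hN : 0 < N) (hZl : N / (1 + η) ≤ Z) (hZu : Z ≤ N) :
    |N⁻¹ - ((1 + d) ^ 2 * Z)⁻¹| ≤ 2 * η / (N * (1 - η)) := by
  have hη : 0 ≤ η := hd.trans hdη
  have hZ : 0 < Z := lt_of_lt_of_le (by positivity) hZl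
  have hupper : ((1 + d) ^ 2 * Z)⁻¹ ≤ (1 + η) / N := by
    rw [inv_le_comm₀ (by positivity) (by positivity), inv_div]
    calc N / (1 + η) ≤ Z := hZl
      _ ≤ (1 + d) ^ 2 * Z := le_mul_of_one_le_left hZ.le (one_le_pow₀ (by linarith))
  have hlower : ((1 + η) ^ 2 * N)⁻¹ ≤ ((1 + d) ^ 2 * Z)⁻¹ :=
    inv_anti₀ (by positivity) (mul_le_mul (by gcongr) hZu hZ.le (by positivity))
  rw [abs_le]
  constructor
  · have : η / N ≤ 2 * η / (N * (1 - η)) := by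
      rw [div_le_div_iff₀ hN (by nlinarith)]
      nlinarith [mul_nonneg hη hN.le, mul_nonneg (mul_nonneg hη hη) hN.le]
    have : (1 + η) / N = N⁻¹ + η / N := by rw [add_div, one_div]
    linarith
  · have : N⁻¹ - ((1 + η) ^ 2 * N)⁻¹ ≤ 2 * η / (N * (1 - η)) := by
      rw [inv_eq_one_div, inv_eq_one_div, div_sub_div _ _ hN.ne' (by positivity),
        div_le_div_iff₀ (by positivity) (by nlinarith)]
      have key : (2 * η + η ^ 2) * (1 - η) ≤ 2 * η * (1 + η) ^ 2 := by
        nlinarith [sq_nonneg η, mul_nonneg hη (mul_nonneg hη hη)]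
      nlinarith [mul_le_mul_of_nonneg_right key (mul_pos hN hN).le]
    linarith

/-- With η = (diam{y_i})² < 1 and p_{ij} ≥ 0, α > 0, for all i ≠ j,
|S_{ij}(α) − α p_{ij} + 1/(n(n-1))| ≤ α p_{ij} η + 2η/(n(n-1)(1 − η)). -/
theorem Scoef_approx {n : ℕ} (hn : 2 ≤ n) (y : Fin n → Fin 2 → ℝ)
    (p : Fin n → Fin n → ℝ) (hp : ∀ i j, 0 ≤ p i j) (α : ℝ) (hα : 0 < α)
    (η : ℝ) (hη : η = ⨆ i, ⨆ j, dsq y i j) (hη1 : η < 1) :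
    ∀ i j : Fin n, i ≠ j →
      |Scoef p α y i j - α * p i j + ((n : ℝ) * ((n : ℝ) - 1))⁻¹|
        ≤ α * p i j * η + 2 * η / ((n : ℝ) * ((n : ℝ) - 1) * (1 - η)) := by
  intro i j _
  have hdη : ∀ a b, dsq y a b ≤ η := hη ▸ dsq_le_iSup_iSup y
  have hN : 0 < (n : ℝ) * ((n : ℝ) - 1) := by
    have : (2 : ℝ) ≤ n := by exact_mod_cast hn
    nlinarith
  rw [Scoef_eq]
  calc _ = |(α * p i j / (1 + dsq y i j) - α * p i j)
          + (((n : ℝ) * ((n : ℝ) - 1))⁻¹ - ((1 + dsq y i j) ^ 2 * Znorm y)⁻¹)| := by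
        ring_nf
    _ ≤ _ := abs_add_le _ _
    _ ≤ _ := add_le_add
        (abs_div_one_add_sub_self_le (mul_nonneg hα.le (hp i j)) (dsq_nonneg y i j) (hdη i j))
        (abs_inv_sub_inv_sq_mul_le (dsq_nonneg y i j) (hdη i j) hη1 hN
          (div_one_add_le_Znorm y hdη) (Znorm_le y))
end
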